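/- For the graph H_S with S = {312, 321} (m = 2), there are no directed cycles: for every directed edge (x,y) → (y,z) in H_S one has x < max(y,z), and consequently no finite sequence (x_1,x_2) → (x_2,x_3) → ⋯ → (x_k,x_1) → (x_1,x_2) of edges exists. -/
import Mathlib


/-- The edge relation of the graph H_S for S = {312, 321} (m = 2): there is a directed
edge from (x,y) to (y,z) iff x, y, z ∈ (0,1) are pairwise distinct and the
standardization of (x,y,z) is neither 312 (i.e. y < z < x) nor 321 (i.e. z < y < x). -/
def HEdge312321 (x y z : ℝ) : Prop :=
  x ∈ Set.Ioo (0 : ℝ) 1 ∧ y ∈ Set.Ioo (0 : ℝ) 1 ∧ z ∈ Set.Ioo (0 : ℝ) 1 ∧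
  x ≠ y ∧ y ≠ z ∧ x ≠ z ∧
  ¬(y < z ∧ z < x) ∧ ¬(z < y ∧ y < x)

/-- in the graph H_{{312,321}} every edge (x,y) → (y,z) satisfies
x < max y z, and consequently there is no directed cycle
(x₁,x₂) → (x₂,x₃) → ⋯ → (x_k,x₁) → (x₁,x₂). -/
theorem H_312_321_no_cycle :
    (∀ x y z : ℝ, HEdge312321 x y z → x < max y z) ∧
    ∀ (k : ℕ) (x : ℕ → ℝ), 1 ≤ k → (∀ i, x (i + k) = x i) →
      (∀ i, HEdge312321 (x i) (x (i + 1)) (x (i + 2))) → False := by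
  have hedge : ∀ x y z : ℝ, HEdge312321 x y z → x < max y z := by
    rintro x y z ⟨_, _, _, hxy, hyz, hxz, h1, h2⟩
    rcases lt_or_gt_of_ne hyz with h | h
    · rcases lt_or_gt_of_ne hxz with h' | h'
      · exact lt_max_of_lt_right h'
      · exact absurd ⟨h, h'⟩ h1
    · rcases lt_or_gt_of_ne hxy with h' | h'
      · exact lt_max_of_lt_left h'
      · exact absurd ⟨h, h'⟩ h2
  refine ⟨hedge, ?_⟩
  intro k x hk hper hcyc
  -- periodicity for multiples
  have hmul : ∀ n i, x (i + n * k) = x i := by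
    intro n
    induction n with
    | zero => simp
    | succ n ih =>
      intro i
      have : i + (n + 1) * k = (i + k) + n * k := by ring
      rw [this, ih, hper]
  have hmod : ∀ j, x j = x (j % k) := by
    intro j
    conv_lhs => rw [← Nat.mod_add_div j k]
    rw [Nat.mul_comm, hmul]
  -- take the max over range k
  have hne : (Finset.range k).Nonempty := ⟨0, Finset.mem_range.mpr hk⟩
  obtain ⟨i0, hi0mem, hi0⟩ := Finset.exists_max_image (Finset.range k) x hne
  have hle : ∀ j, x j ≤ x i0 := by
    intro j
    rw [hmod j]
    exact hi0 _ (Finset.mem_range.mpr (Nat.mod_lt j hk))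
  have h := hedge _ _ _ (hcyc i0)
  rcases max_cases (x (i0 + 1)) (x (i0 + 2)) with ⟨heq, _⟩ | ⟨heq, _⟩ <;>
    rw [heq] at h <;> exact absurd (hle _) (not_le.mpr h)
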